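/- arXiv:2110.12636 — 6 statements merged into one kernel-verified Lean document; each statement's English description precedes it below -/
import Mathlib

section
/- Let τ₁ ≥ 0, τ₀ ≥ 0, V₀ > 0, V₁ > 0 with not both τ₀ and τ₁ zero. Define Z(φ) = (τ₁ − φ·τ₀)/√(V₁ + φ²·V₀) for φ ≥ 0. Then Z is strictly decreasing on [0, ∞), Z(0) = τ₁/√V₁, and Z(φ) → −τ₀/√V₀ as φ → ∞. -/
open Filter Set

noncomputable def fiellerStat (a b c d φ : ℝ) : ℝ :=
  (a - φ * b) / √(c + φ ^ 2 * d)

theorem hasDerivAt_fiellerStat (a b : ℝ) {c d φ : ℝ} (h : 0 < c + φ ^ 2 * d) :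
    HasDerivAt (fiellerStat a b c d) (-(b * c + φ * d * a) / √(c + φ ^ 2 * d) ^ 3) φ := by
  have hvar : HasDerivAt (fun φ : ℝ => c + φ ^ 2 * d) (2 * φ * d) φ := by
    simpa using ((hasDerivAt_pow 2 φ).mul_const d).const_add c
  have hnum : HasDerivAt (fun φ : ℝ => a - φ * b) (-b) φ := by
    simpa using ((hasDerivAt_id φ).mul_const b).const_sub a
  have hsqrt_pos : 0 < √(c + φ ^ 2 * d) := Real.sqrt_pos.2 h
  refine (hnum.div (hvar.sqrt h.ne') hsqrt_pos.ne').congr_deriv ?_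
  have hsq : √(c + φ ^ 2 * d) ^ 2 = c + φ ^ 2 * d := Real.sq_sqrt h.le
  field_simp
  linear_combination -b * hsq

theorem strictAntiOn_fiellerStat {a b c d : ℝ} (ha : 0 ≤ a) (hb : 0 ≤ b) (hc : 0 < c)
    (hd : 0 < d) (hab : ¬(b = 0 ∧ a = 0)) :
    StrictAntiOn (fiellerStat a b c d) (Ici 0) := by
  have hvar_pos (φ : ℝ) : 0 < c + φ ^ 2 * d := by positivity
  have hderiv (φ : ℝ) := hasDerivAt_fiellerStat a b (hvar_pos φ)
  refine strictAntiOn_of_deriv_neg (convex_Ici 0)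
    (fun φ _ => (hderiv φ).continuousAt.continuousWithinAt) fun φ hφ => ?_
  rw [interior_Ici, mem_Ioi] at hφ
  rw [(hderiv φ).deriv, neg_div, neg_lt_zero]
  have hnum : 0 < b * c + φ * d * a := by
    rcases hb.eq_or_lt with rfl | hb
    · have ha : 0 < a := ha.lt_of_ne' fun h => hab ⟨rfl, h⟩
      simp only [zero_mul, zero_add]
      positivity
    · positivity
  have := Real.sqrt_pos.2 (hvar_pos φ)
  positivity

theorem tendsto_fiellerStat_atTop (a b c : ℝ) {d : ℝ} (hd : 0 < d) :
    Tendsto (fiellerStat a b c d) atTop (nhds (-b / √d)) := by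
  have hrescale : (fun φ => (a / φ - b) / √(c / φ ^ 2 + d)) =ᶠ[atTop] fiellerStat a b c d := by
    filter_upwards [eventually_gt_atTop 0] with φ hφ
    have hvar : c + φ ^ 2 * d = φ ^ 2 * (c / φ ^ 2 + d) := by field_simp
    rw [fiellerStat, hvar, Real.sqrt_mul (sq_nonneg φ), Real.sqrt_sq hφ.le]
    field_simp
  refine Tendsto.congr' hrescale ?_
  have hnum : Tendsto (fun φ : ℝ => a / φ - b) atTop (nhds (-b)) := by
    simpa using (tendsto_const_nhds.div_atTop tendsto_id).sub (tendsto_const_nhds (x := b))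
  have hvar : Tendsto (fun φ : ℝ => c / φ ^ 2 + d) atTop (nhds d) := by
    simpa using (tendsto_const_nhds (x := c)).div_atTop (tendsto_pow_atTop two_ne_zero)
      |>.add (tendsto_const_nhds (x := d))
  exact hnum.div hvar.sqrt (Real.sqrt_pos.2 hd).ne'

theorem stmt_0 (τ1 τ0 V0 V1 : ℝ) (hτ1 : 0 ≤ τ1) (hτ0 : 0 ≤ τ0)
    (hV0 : 0 < V0) (hV1 : 0 < V1) (hne : ¬ (τ0 = 0 ∧ τ1 = 0)) :
    StrictAntiOn (fun φ : ℝ => (τ1 - φ * τ0) / Real.sqrt (V1 + φ ^ 2 * V0)) (Set.Ici 0) ∧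
    (τ1 - (0:ℝ) * τ0) / Real.sqrt (V1 + (0:ℝ) ^ 2 * V0) = τ1 / Real.sqrt V1 ∧
    Filter.Tendsto (fun φ : ℝ => (τ1 - φ * τ0) / Real.sqrt (V1 + φ ^ 2 * V0))
      Filter.atTop (nhds (-τ0 / Real.sqrt V0)) :=
  ⟨strictAntiOn_fiellerStat hτ1 hτ0 hV1 hV0 hne, by simp,
    tendsto_fiellerStat_atTop τ1 τ0 V1 hV0⟩
end

section
/- Let τ̂₁ ≥ 0, τ̂₀ ≥ 0, and let U₁, L₀ satisfy τ̂₁ ≤ U₁ and 0 ≤ L₀ ≤ τ̂₀. Define b = τ̂₁·τ̂₀, a_u = τ̂₀² − (L₀ − τ̂₀)², c_u = τ̂₁² − (U₁ − τ̂₁)². Then a_u ≥ 0 and b² − a_u·c_u ≥ 0. -/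
/-! The coefficient `a = L₀ (2τ₀ - L₀)` lies in `[0, τ₀²]` and `c ≤ τ₁²`; since `τ₁² ≥ 0`, this gives
`a * c ≤ τ₀² * τ₁² = b²` without a case split on the sign of `c`. -/

theorem sq_sub_sq_sub_nonneg {x y : ℝ} (hy : 0 ≤ y) (hyx : y ≤ 2 * x) :
    0 ≤ x ^ 2 - (y - x) ^ 2 := by
  have hfactor : x ^ 2 - (y - x) ^ 2 = y * (2 * x - y) := by ring
  rw [hfactor]
  exact mul_nonneg hy (sub_nonneg.2 hyx)

theorem sq_sub_sq_mul_sq_sub_sq_le_mul_sq {p q r s : ℝ} (hpr : 0 ≤ p ^ 2 - r ^ 2) :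
    (p ^ 2 - r ^ 2) * (q ^ 2 - s ^ 2) ≤ (q * p) ^ 2 := by
  rw [mul_pow, mul_comm (q ^ 2)]
  exact mul_le_mul_of_nonneg (sub_le_self _ (sq_nonneg r)) (sub_le_self _ (sq_nonneg s)) hpr
    (sq_nonneg q)

theorem stmt_3_general (τ1 τ0 U1 L0 : ℝ)
    (hL0 : 0 ≤ L0) (hL0' : L0 ≤ τ0) :
    0 ≤ τ0 ^ 2 - (L0 - τ0) ^ 2 ∧
    0 ≤ (τ1 * τ0) ^ 2 - (τ0 ^ 2 - (L0 - τ0) ^ 2) * (τ1 ^ 2 - (U1 - τ1) ^ 2) := by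
  have ha : 0 ≤ τ0 ^ 2 - (L0 - τ0) ^ 2 := sq_sub_sq_sub_nonneg hL0 (by linarith)
  exact ⟨ha, sub_nonneg.2 (sq_sub_sq_mul_sq_sub_sq_le_mul_sq ha)⟩

theorem stmt_3 (τ1 τ0 U1 L0 : ℝ) (hτ1 : 0 ≤ τ1) (hτ0 : 0 ≤ τ0)
    (hU1 : τ1 ≤ U1) (hL0 : 0 ≤ L0) (hL0' : L0 ≤ τ0) :
    0 ≤ τ0 ^ 2 - (L0 - τ0) ^ 2 ∧
    0 ≤ (τ1 * τ0) ^ 2 - (τ0 ^ 2 - (L0 - τ0) ^ 2) * (τ1 ^ 2 - (U1 - τ1) ^ 2) :=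
  stmt_3_general τ1 τ0 U1 L0 hL0 hL0'
end

section
/- Let τ̂₁ > 0, τ̂₀ > 0, 0 < L₁ < τ̂₁, τ̂₀ < U₀ < 2τ̂₀. Define b = τ̂₁τ̂₀, a_l = τ̂₀² − (U₀ − τ̂₀)², c_l = τ̂₁² − (L₁ − τ̂₁)², and φ_l = (b − √(b² − a_l c_l))/a_l. Then a_l > 0, c_l > 0, 0 < φ_l, and φ_l ≤ τ̂₁/τ̂₀; moreover, setting φ = φ_l makes the lower MOVER limit τ̂₁ − φτ̂₀ − √((L₁ − τ̂₁)² + φ²(U₀ − τ̂₀)²) equal to zero. -/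
/-!
The limit `φₗ` is the smaller root of `q φ = a φ² - 2 b φ + c`, and identically
`q φ = (τ₁ - φ τ₀)² - ((L₁ - τ₁)² + φ² (U₀ - τ₀)²)`. Hence `q (τ₁ / τ₀) ≤ 0`, so `τ₁ / τ₀` lies
between the two roots (in particular the discriminant is nonnegative and `φₗ ≤ τ₁ / τ₀`), and at
the root `φₗ` the square root equals `τ₁ - φₗ τ₀ ≥ 0`, which makes the MOVER lower limit vanish.
-/

theorem sq_sub_sub_sq_pos {x y : ℝ} (hx : 0 < x) (hxy : x < 2 * y) : 0 < y ^ 2 - (x - y) ^ 2 := by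
  have hfactor : y ^ 2 - (x - y) ^ 2 = x * (2 * y - x) := by ring
  rw [hfactor]
  exact mul_pos hx (by linarith)

/-- The smaller root of `a x² - 2 b x + c` when `a > 0`. -/
noncomputable def smallerRoot (a b c : ℝ) : ℝ := (b - √(b ^ 2 - a * c)) / a

section SmallerRoot

variable {a b c : ℝ}

theorem sq_mul_sub_le_of_quadratic_nonpos {x : ℝ} (ha : 0 < a)
    (hx : a * x ^ 2 - 2 * b * x + c ≤ 0) : (a * x - b) ^ 2 ≤ b ^ 2 - a * c := by
  have hcompleted : (a * x - b) ^ 2 - (b ^ 2 - a * c) = a * (a * x ^ 2 - 2 * b * x + c) := by ring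
  nlinarith [mul_nonpos_of_nonneg_of_nonpos ha.le hx]

theorem discrim_nonneg_of_quadratic_nonpos {x : ℝ} (ha : 0 < a)
    (hx : a * x ^ 2 - 2 * b * x + c ≤ 0) : 0 ≤ b ^ 2 - a * c :=
  (sq_nonneg _).trans (sq_mul_sub_le_of_quadratic_nonpos ha hx)

theorem smallerRoot_le_of_quadratic_nonpos {x : ℝ} (ha : 0 < a)
    (hx : a * x ^ 2 - 2 * b * x + c ≤ 0) : smallerRoot a b c ≤ x := by
  have habs : |a * x - b| ≤ √(b ^ 2 - a * c) :=
    Real.abs_le_sqrt (sq_mul_sub_le_of_quadratic_nonpos ha hx)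
  rw [smallerRoot, div_le_iff₀ ha]
  linarith [neg_abs_le (a * x - b)]

theorem smallerRoot_isRoot (ha : a ≠ 0) (hD : 0 ≤ b ^ 2 - a * c) :
    a * smallerRoot a b c ^ 2 - 2 * b * smallerRoot a b c + c = 0 := by
  have hs : √(b ^ 2 - a * c) ^ 2 = b ^ 2 - a * c := Real.sq_sqrt hD
  rw [smallerRoot]
  field_simp
  linear_combination hs

theorem smallerRoot_pos (ha : 0 < a) (hb : 0 < b) (hc : 0 < c) : 0 < smallerRoot a b c := by
  have hsqrt : √(b ^ 2 - a * c) < b := (Real.sqrt_lt' hb).2 (by nlinarith [mul_pos ha hc])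
  exact div_pos (by linarith) ha

end SmallerRoot

section Mover

variable (t₁ t₀ e₁ e₀ φ : ℝ)

theorem mover_quadratic_eq :
    (t₀ ^ 2 - e₀ ^ 2) * φ ^ 2 - 2 * (t₁ * t₀) * φ + (t₁ ^ 2 - e₁ ^ 2) =
      (t₁ - φ * t₀) ^ 2 - (e₁ ^ 2 + φ ^ 2 * e₀ ^ 2) := by
  ring

theorem mover_quadratic_nonpos_at_ratio (ht₀ : t₀ ≠ 0) :
    (t₀ ^ 2 - e₀ ^ 2) * (t₁ / t₀) ^ 2 - 2 * (t₁ * t₀) * (t₁ / t₀) + (t₁ ^ 2 - e₁ ^ 2) ≤ 0 := by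
  rw [mover_quadratic_eq, div_mul_cancel₀ _ ht₀, sub_self, sq, zero_mul, zero_sub, neg_nonpos]
  positivity

variable {t₁ t₀ e₁ e₀ φ}

theorem mover_lower_eq_zero
    (hq : (t₀ ^ 2 - e₀ ^ 2) * φ ^ 2 - 2 * (t₁ * t₀) * φ + (t₁ ^ 2 - e₁ ^ 2) = 0)
    (hφ : φ * t₀ ≤ t₁) : t₁ - φ * t₀ - √(e₁ ^ 2 + φ ^ 2 * e₀ ^ 2) = 0 := by
  rw [mover_quadratic_eq, sub_eq_zero] at hq
  rw [← hq, Real.sqrt_sq (by linarith), sub_self]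

end Mover

theorem stmt_4_general (τ1 τ0 L1 U0 : ℝ)
    (hL1 : 0 < L1) (hL1' : L1 < τ1) (hU0 : τ0 < U0) (hU0' : U0 < 2 * τ0) :
    let b := τ1 * τ0
    let al := τ0 ^ 2 - (U0 - τ0) ^ 2
    let cl := τ1 ^ 2 - (L1 - τ1) ^ 2
    let φl := (b - Real.sqrt (b ^ 2 - al * cl)) / al
    0 < al ∧ 0 < cl ∧ 0 < φl ∧ φl ≤ τ1 / τ0 ∧
      τ1 - φl * τ0 - Real.sqrt ((L1 - τ1) ^ 2 + φl ^ 2 * (U0 - τ0) ^ 2) = 0 := by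
  intro b al cl φl
  have hτ1 : 0 < τ1 := by linarith
  have hτ0 : 0 < τ0 := by linarith
  have hal : 0 < al := sq_sub_sub_sq_pos (by linarith) hU0'
  have hcl : 0 < cl := sq_sub_sub_sq_pos hL1 (by linarith)
  have hratio := mover_quadratic_nonpos_at_ratio τ1 τ0 (L1 - τ1) (U0 - τ0) hτ0.ne'
  have hle : φl ≤ τ1 / τ0 := smallerRoot_le_of_quadratic_nonpos hal hratio
  have hroot := smallerRoot_isRoot hal.ne' (discrim_nonneg_of_quadratic_nonpos hal hratio)
  refine ⟨hal, hcl, smallerRoot_pos hal (mul_pos hτ1 hτ0) hcl, hle, ?_⟩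
  exact mover_lower_eq_zero hroot ((le_div_iff₀ hτ0).1 hle)

theorem stmt_4 (τ1 τ0 L1 U0 : ℝ) (hτ1 : 0 < τ1) (hτ0 : 0 < τ0)
    (hL1 : 0 < L1) (hL1' : L1 < τ1) (hU0 : τ0 < U0) (hU0' : U0 < 2 * τ0) :
    let b := τ1 * τ0
    let al := τ0 ^ 2 - (U0 - τ0) ^ 2
    let cl := τ1 ^ 2 - (L1 - τ1) ^ 2
    let φl := (b - Real.sqrt (b ^ 2 - al * cl)) / al
    0 < al ∧ 0 < cl ∧ 0 < φl ∧ φl ≤ τ1 / τ0 ∧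
      τ1 - φl * τ0 - Real.sqrt ((L1 - τ1) ^ 2 + φl ^ 2 * (U0 - τ0) ^ 2) = 0 :=
  stmt_4_general τ1 τ0 L1 U0 hL1 hL1' hU0 hU0'
end

section
/- Consider two strata with group sample sizes n_{s g} > 0 for s ∈ {1,2}, g ∈ {0,1}, success probabilities p_{s g} ∈ [0,1], and suppose the risk difference is constant: p_{11} − p_{10} = p_{21} − p_{20} = Δ. Let r_s = n_{s1}/n_{s0}. Then the expectation of the unstratified (crude) risk-difference estimate satisfies (n_{11}p_{11} + n_{21}p_{21})/(n_{11} + n_{21}) − (n_{10}p_{10} + n_{20}p_{20})/(n_{10} + n_{20}) = Δ + n_{10}n_{20}(r₁ − r₂)(p_{10} − p_{20}) / ((n_{10}r₁ + n_{20}r₂)(n_{10} + n_{20})). -/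
/-!
With a constant risk difference each group-1 proportion is `p_{s0} + Δ`, so the crude difference is
`Δ` plus the difference of two weightings of the control proportions: by `n_{s1}` in group 1 and
by `n_{s0}` in group 0. Those weightings differ by a multiple of
`n_{11} n_{20} - n_{21} n_{10} = n_{10} n_{20} (r₁ - r₂)` times `p_{10} - p_{20}`.
-/

section CrudeRiskDifference

variable {K : Type*} [Field K]

theorem mul_mul_sub_div_eq {n10 n11 n20 n21 : K} (h10 : n10 ≠ 0) (h20 : n20 ≠ 0) :
    n10 * n20 * (n11 / n10 - n21 / n20) = n11 * n20 - n21 * n10 := by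
  field_simp

theorem crude_sub_eq_add_bias {n10 n11 n20 n21 : K} (h1 : n11 + n21 ≠ 0) (h0 : n10 + n20 ≠ 0)
    (p10 p20 Δ : K) :
    (n11 * (p10 + Δ) + n21 * (p20 + Δ)) / (n11 + n21) - (n10 * p10 + n20 * p20) / (n10 + n20) =
      Δ + (n11 * n20 - n21 * n10) * (p10 - p20) / ((n11 + n21) * (n10 + n20)) := by
  field_simp
  ring

end CrudeRiskDifference

theorem stmt_6_general (n10 n11 n20 n21 p10 p11 p20 p21 Δ : ℝ)
    (h10 : 0 < n10) (h11 : 0 < n11) (h20 : 0 < n20) (h21 : 0 < n21)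
    (hΔ1 : p11 - p10 = Δ) (hΔ2 : p21 - p20 = Δ) :
    (n11 * p11 + n21 * p21) / (n11 + n21) - (n10 * p10 + n20 * p20) / (n10 + n20) =
      Δ + n10 * n20 * (n11 / n10 - n21 / n20) * (p10 - p20) /
        ((n10 * (n11 / n10) + n20 * (n21 / n20)) * (n10 + n20)) := by
  obtain rfl : p11 = p10 + Δ := by linarith
  obtain rfl : p21 = p20 + Δ := by linarith
  rw [mul_mul_sub_div_eq h10.ne' h20.ne', mul_div_cancel₀ _ h10.ne', mul_div_cancel₀ _ h20.ne']
  exact crude_sub_eq_add_bias (by positivity) (by positivity) p10 p20 Δ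

theorem stmt_6 (n10 n11 n20 n21 p10 p11 p20 p21 Δ : ℝ)
    (h10 : 0 < n10) (h11 : 0 < n11) (h20 : 0 < n20) (h21 : 0 < n21)
    (hp10 : p10 ∈ Set.Icc (0:ℝ) 1) (hp11 : p11 ∈ Set.Icc (0:ℝ) 1)
    (hp20 : p20 ∈ Set.Icc (0:ℝ) 1) (hp21 : p21 ∈ Set.Icc (0:ℝ) 1)
    (hΔ1 : p11 - p10 = Δ) (hΔ2 : p21 - p20 = Δ) :
    (n11 * p11 + n21 * p21) / (n11 + n21) - (n10 * p10 + n20 * p20) / (n10 + n20) =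
      Δ + n10 * n20 * (n11 / n10 - n21 / n20) * (p10 - p20) /
        ((n10 * (n11 / n10) + n20 * (n21 / n20)) * (n10 + n20)) :=
  stmt_6_general n10 n11 n20 n21 p10 p11 p20 p21 Δ h10 h11 h20 h21 hΔ1 hΔ2
end

section
/- Under the setup of the two-stratum bias identity, the unstratified risk-difference expectation equals Δ if and only if p_{10} = p_{20} or n_{11}/n_{10} = n_{21}/n_{20}. -/
/-!
Substituting `p_{s1} = p_{s0} + Δ`, the pooled difference minus `Δ` is the difference of two
weighted averages of `p_{10}` and `p_{20}`: with weights `n_{11} : n_{21}` for the treated and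
`n_{10} : n_{20}` for the controls. It factors as `(n_{11}n_{20} - n_{21}n_{10})(p_{10} - p_{20})`
over positive totals, so it vanishes exactly when `p_{10} = p_{20}` or `n_{11}/n_{10} = n_{21}/n_{20}`.
-/

lemma weightedAvg_sub_weightedAvg {K : Type*} [Field K] {a b c d x y : K}
    (hab : a + b ≠ 0) (hcd : c + d ≠ 0) :
    (a * x + b * y) / (a + b) - (c * x + d * y) / (c + d)
      = (a * d - b * c) * (x - y) / ((a + b) * (c + d)) := by
  field_simp
  ring

lemma pooledRiskDiff_sub_eq {K : Type*} [Field K] {n10 n11 n20 n21 p10 p11 p20 p21 Δ : K}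
    (h1 : n11 + n21 ≠ 0) (h0 : n10 + n20 ≠ 0) (hΔ1 : p11 - p10 = Δ) (hΔ2 : p21 - p20 = Δ) :
    (n11 * p11 + n21 * p21) / (n11 + n21) - (n10 * p10 + n20 * p20) / (n10 + n20) - Δ
      = (n11 * n20 - n21 * n10) * (p10 - p20) / ((n11 + n21) * (n10 + n20)) := by
  obtain rfl : p11 = p10 + Δ := by rw [← hΔ1]; ring
  obtain rfl : p21 = p20 + Δ := by rw [← hΔ2]; ring
  have hshift : (n11 * (p10 + Δ) + n21 * (p20 + Δ)) / (n11 + n21)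
      = (n11 * p10 + n21 * p20) / (n11 + n21) + Δ := by
    field_simp
    ring
  rw [hshift, add_sub_right_comm, add_sub_cancel_right, weightedAvg_sub_weightedAvg h1 h0]

theorem stmt_7_general (n10 n11 n20 n21 p10 p11 p20 p21 Δ : ℝ)
    (h10 : 0 < n10) (h11 : 0 < n11) (h20 : 0 < n20) (h21 : 0 < n21)
    (hΔ1 : p11 - p10 = Δ) (hΔ2 : p21 - p20 = Δ) :
    ((n11 * p11 + n21 * p21) / (n11 + n21) - (n10 * p10 + n20 * p20) / (n10 + n20) = Δ)
      ↔ (p10 = p20 ∨ n11 / n10 = n21 / n20) := by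
  have h1 : n11 + n21 ≠ 0 := by positivity
  have h0 : n10 + n20 ≠ 0 := by positivity
  rw [← sub_eq_zero, pooledRiskDiff_sub_eq h1 h0 hΔ1 hΔ2, div_eq_zero_iff,
    or_iff_left (mul_ne_zero h1 h0), mul_eq_zero, sub_eq_zero, sub_eq_zero,
    div_eq_div_iff h10.ne' h20.ne', or_comm]

theorem stmt_7 (n10 n11 n20 n21 p10 p11 p20 p21 Δ : ℝ)
    (h10 : 0 < n10) (h11 : 0 < n11) (h20 : 0 < n20) (h21 : 0 < n21)
    (hp10 : p10 ∈ Set.Icc (0:ℝ) 1) (hp11 : p11 ∈ Set.Icc (0:ℝ) 1)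
    (hp20 : p20 ∈ Set.Icc (0:ℝ) 1) (hp21 : p21 ∈ Set.Icc (0:ℝ) 1)
    (hΔ1 : p11 - p10 = Δ) (hΔ2 : p21 - p20 = Δ) :
    ((n11 * p11 + n21 * p21) / (n11 + n21) - (n10 * p10 + n20 * p20) / (n10 + n20) = Δ)
      ↔ (p10 = p20 ∨ n11 / n10 = n21 / n20) :=
  stmt_7_general n10 n11 n20 n21 p10 p11 p20 p21 Δ h10 h11 h20 h21 hΔ1 hΔ2
end

section
/- Let τ̂₁ > 0, τ̂₀ > 0 and suppose 0 < L₀ < τ̂₀ < U₀ < 2τ̂₀ and 0 < L₁ < τ̂₁ < U₁ < 2τ̂₁. Define φ_l = (b − √(b² − a_l c_l))/a_l and φ_u = (b + √(b² − a_u c_u))/a_u with b = τ̂₁τ̂₀, a_l = τ̂₀² − (U₀ − τ̂₀)², c_l = τ̂₁² − (L₁ − τ̂₁)², a_u = τ̂₀² − (L₀ − τ̂₀)², c_u = τ̂₁² − (U₁ − τ̂₁)². Then 0 < φ_l ≤ τ̂₁/τ̂₀ ≤ φ_u. -/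
/-!
Rationalising the smaller Fieller root gives `(b - √(b² - ac)) / a = c / (b + √(b² - ac))`.
With `b = τ̂₁τ̂₀`, `0 < c ≤ τ̂₁²` this is positive and at most `c / b ≤ τ̂₁ / τ̂₀`, while the larger root
is at least `b / a ≥ b / τ̂₀² = τ̂₁ / τ̂₀` because `0 < a ≤ τ̂₀²`. Each of `a_l, c_l, a_u` has the form
`t² - (x - t)² = x (2t - x)`, which lies in `(0, t²]` for `0 < x < 2t`.
-/

open Real

lemma sq_sub_sq_sub_pos {t x : ℝ} (hx : 0 < x) (hxt : x < 2 * t) : 0 < t ^ 2 - (x - t) ^ 2 := by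
  have h : t ^ 2 - (x - t) ^ 2 = x * (2 * t - x) := by ring
  rw [h]
  exact mul_pos hx (by linarith)

lemma sq_sub_sq_sub_le (t x : ℝ) : t ^ 2 - (x - t) ^ 2 ≤ t ^ 2 :=
  sub_le_self _ (sq_nonneg _)

lemma sub_sqrt_div_eq_div_add_sqrt {a b c : ℝ} (ha : a ≠ 0) (hb : 0 < b) (hac : a * c ≤ b ^ 2) :
    (b - √(b ^ 2 - a * c)) / a = c / (b + √(b ^ 2 - a * c)) := by
  have hs : √(b ^ 2 - a * c) ^ 2 = b ^ 2 - a * c := sq_sqrt (by linarith)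
  have hpos : 0 < b + √(b ^ 2 - a * c) := by positivity
  rw [div_eq_div_iff ha hpos.ne']
  linear_combination -hs

lemma fieller_lower_pos {a b c : ℝ} (ha : a ≠ 0) (hb : 0 < b) (hc : 0 < c) (hac : a * c ≤ b ^ 2) :
    0 < (b - √(b ^ 2 - a * c)) / a := by
  rw [sub_sqrt_div_eq_div_add_sqrt ha hb hac]
  positivity

lemma fieller_lower_le_div {a c A C : ℝ} (hA : 0 < A) (hC : 0 < C) (ha : a ≠ 0) (hc : 0 ≤ c)
    (hcC : c ≤ C ^ 2) (hac : a * c ≤ (C * A) ^ 2) :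
    (C * A - √((C * A) ^ 2 - a * c)) / a ≤ C / A := by
  have hb : 0 < C * A := mul_pos hC hA
  rw [sub_sqrt_div_eq_div_add_sqrt ha hb hac]
  calc c / (C * A + √((C * A) ^ 2 - a * c))
      ≤ c / (C * A) := div_le_div_of_nonneg_left hc hb (le_add_of_nonneg_right (sqrt_nonneg _))
    _ ≤ C ^ 2 / (C * A) := div_le_div_of_nonneg_right hcC hb.le
    _ = C / A := by field_simp

lemma div_le_fieller_upper {a A C : ℝ} (d : ℝ) (hA : 0 < A) (hC : 0 ≤ C) (ha : 0 < a)
    (haA : a ≤ A ^ 2) :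
    C / A ≤ (C * A + √d) / a :=
  calc C / A = C * A / A ^ 2 := by field_simp
    _ ≤ C * A / a := div_le_div_of_nonneg_left (by positivity) ha haA
    _ ≤ (C * A + √d) / a := by gcongr; exact le_add_of_nonneg_right (sqrt_nonneg d)

theorem stmt_15_general (τ1 τ0 L1 U1 L0 U0 : ℝ) (hτ1 : 0 < τ1) (hτ0 : 0 < τ0)
    (hL0 : 0 < L0) (hL0' : L0 < τ0) (hU0 : τ0 < U0) (hU0' : U0 < 2 * τ0)
    (hL1 : 0 < L1) (hL1' : L1 < τ1) :
    let b := τ1 * τ0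
    let al := τ0 ^ 2 - (U0 - τ0) ^ 2
    let cl := τ1 ^ 2 - (L1 - τ1) ^ 2
    let au := τ0 ^ 2 - (L0 - τ0) ^ 2
    let cu := τ1 ^ 2 - (U1 - τ1) ^ 2
    let φl := (b - Real.sqrt (b ^ 2 - al * cl)) / al
    let φu := (b + Real.sqrt (b ^ 2 - au * cu)) / au
    0 < φl ∧ φl ≤ τ1 / τ0 ∧ τ1 / τ0 ≤ φu := by
  intro b al cl au cu φl φu
  have hal : 0 < al := sq_sub_sq_sub_pos (by linarith) hU0'
  have hcl : 0 < cl := sq_sub_sq_sub_pos hL1 (by linarith)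
  have hau : 0 < au := sq_sub_sq_sub_pos hL0 (by linarith)
  have hdisc : al * cl ≤ b ^ 2 := by
    rw [show b ^ 2 = τ0 ^ 2 * τ1 ^ 2 by ring]
    exact mul_le_mul (sq_sub_sq_sub_le _ _) (sq_sub_sq_sub_le _ _) hcl.le (sq_nonneg _)
  exact ⟨fieller_lower_pos hal.ne' (mul_pos hτ1 hτ0) hcl hdisc,
    fieller_lower_le_div hτ0 hτ1 hal.ne' hcl.le (sq_sub_sq_sub_le _ _) hdisc,
    div_le_fieller_upper _ hτ0 hτ1.le hau (sq_sub_sq_sub_le _ _)⟩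

theorem stmt_15 (τ1 τ0 L1 U1 L0 U0 : ℝ) (hτ1 : 0 < τ1) (hτ0 : 0 < τ0)
    (hL0 : 0 < L0) (hL0' : L0 < τ0) (hU0 : τ0 < U0) (hU0' : U0 < 2 * τ0)
    (hL1 : 0 < L1) (hL1' : L1 < τ1) (hU1 : τ1 < U1) (hU1' : U1 < 2 * τ1) :
    let b := τ1 * τ0
    let al := τ0 ^ 2 - (U0 - τ0) ^ 2
    let cl := τ1 ^ 2 - (L1 - τ1) ^ 2
    let au := τ0 ^ 2 - (L0 - τ0) ^ 2
    let cu := τ1 ^ 2 - (U1 - τ1) ^ 2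
    let φl := (b - Real.sqrt (b ^ 2 - al * cl)) / al
    let φu := (b + Real.sqrt (b ^ 2 - au * cu)) / au
    0 < φl ∧ φl ≤ τ1 / τ0 ∧ τ1 / τ0 ≤ φu :=
  stmt_15_general τ1 τ0 L1 U1 L0 U0 hτ1 hτ0 hL0 hL0' hU0 hU0' hL1 hL1'
end
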